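/- arXiv:2603.20685 — 4 statements merged into one kernel-verified Lean document; each statement's English description precedes it below -/
import Mathlib

section
/- Let T be a continuous map of a compact metric space X with non-wandering set Ω. For any open neighborhood U of Ω there exists N ∈ ℕ such that every orbit of T spends at most N steps outside of U; that is, for every x ∈ X, the cardinality of {n ∈ ℕ : Tⁿ(x) ∉ U} is at most N. -/
/-!
Every point of the compact set `Uᶜ` is wandering, so finitely many wandering neighbourhoods `V₁, …, V_N`
cover `Uᶜ`. An orbit visits a wandering set at most once, since two visits at times `m < m'` would
put `T^[m'] x` in `V ∩ T^[m' - m] '' V`; hence it spends at most `N` steps outside `U`.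
-/

open Function Topology

theorem Set.finite_and_ncard_le_of_subset_biUnion {ι α : Type*} (t : Finset ι) (f : ι → Set α)
    (hf : ∀ i ∈ t, (f i).Subsingleton) {s : Set α} (hs : s ⊆ ⋃ i ∈ t, f i) :
    s.Finite ∧ s.ncard ≤ t.card := by
  have hfin : (⋃ i ∈ t, f i).Finite := t.finite_toSet.biUnion fun i hi => (hf i hi).finite
  refine ⟨hfin.subset hs, ?_⟩
  calc s.ncard ≤ (⋃ i ∈ t, f i).ncard := Set.ncard_le_ncard hs hfin
    _ ≤ ∑ i ∈ t, (f i).ncard := t.set_ncard_biUnion_le f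
    _ ≤ ∑ _i ∈ t, 1 := Finset.sum_le_sum fun i hi =>
      (Set.ncard_le_one (hf i hi).finite).2 fun _ ha _ hb => hf i hi ha hb
    _ = t.card := by simp

theorem subsingleton_setOf_iterate_mem_of_wandering {X : Type*} {T : X → X} {V : Set X}
    (hV : ∀ n ≥ 1, V ∩ T^[n] '' V = ∅) (x : X) : {n : ℕ | T^[n] x ∈ V}.Subsingleton := by
  have not_both : ∀ m m', m < m' → T^[m] x ∈ V → T^[m'] x ∉ V := by
    intro m m' hlt hm hm'
    have hmem : T^[m'] x ∈ V ∩ T^[m' - m] '' V :=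
      ⟨hm', T^[m] x, hm, by rw [← iterate_add_apply, Nat.sub_add_cancel hlt.le]⟩
    rwa [hV (m' - m) (by omega)] at hmem
  intro m hm m' hm'
  by_contra hne
  rcases Nat.lt_or_gt_of_ne hne with hlt | hlt
  exacts [not_both _ _ hlt hm hm', not_both _ _ hlt hm' hm]

theorem stmt_1_general {X : Type*} [MetricSpace X] [CompactSpace X]
    (T : X → X)
    (Ω : Set X)
    (hΩ : Ω = {x : X | ∀ V ∈ nhds x, ∃ n ≥ 1, (V ∩ T^[n] '' V).Nonempty})
    (U : Set X) (hU : IsOpen U) (hΩU : Ω ⊆ U) :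
    ∃ N : ℕ, ∀ x : X, ({n : ℕ | T^[n] x ∉ U}).Finite ∧
      ({n : ℕ | T^[n] x ∉ U}).ncard ≤ N := by
  have wandering : ∀ x ∉ U, ∃ V ∈ 𝓝 x, ∀ n ≥ 1, V ∩ T^[n] '' V = ∅ := by
    intro x hx
    have hxΩ : x ∉ Ω := fun h => hx (hΩU h)
    simpa [hΩ, Set.not_nonempty_iff_eq_empty] using hxΩ
  choose! V hV_nhds hV_wandering using wandering
  obtain ⟨t, htU, hcover⟩ := hU.isClosed_compl.isCompact.elim_nhds_subcover V hV_nhds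
  refine ⟨t.card, fun x => Set.finite_and_ncard_le_of_subset_biUnion t _
    (fun y hy => subsingleton_setOf_iterate_mem_of_wandering (hV_wandering y (htU y hy)) x)
    fun n hn => ?_⟩
  simpa using hcover hn

theorem stmt_1 {X : Type*} [MetricSpace X] [CompactSpace X]
    (T : X → X) (hT : Continuous T)
    (Ω : Set X)
    (hΩ : Ω = {x : X | ∀ V ∈ nhds x, ∃ n ≥ 1, (V ∩ T^[n] '' V).Nonempty})
    (U : Set X) (hU : IsOpen U) (hΩU : Ω ⊆ U) :
    ∃ N : ℕ, ∀ x : X, ({n : ℕ | T^[n] x ∉ U}).Finite ∧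
      ({n : ℕ | T^[n] x ∉ U}).ncard ≤ N :=
  stmt_1_general T Ω hΩ U hU hΩU
end

section
/- Let μ be a Borel probability measure on a compact metric space X, T: X → X continuous, and ψ ∈ L²(μ) orthogonal to all functions of the form φ - φ∘T with φ continuous. Then μ({x : ψ(x) > 0} \ T⁻¹{x : ψ(x) > 0}) = 0. -/
/-!
Write `ρ₊, ρ₋` for the finite measures with densities `ψ⁺, ψ⁻` with respect to `μ`; they are
mutually singular. Orthogonality of `ψ` to every `φ - φ ∘ T` says that `ρ₊ + T₊ρ₋` and
`ρ₋ + T₊ρ₊` integrate all bounded continuous functions alike, so they are equal. Restricted to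
a set carrying `ρ₊` and missed by `ρ₋`, this gives `ρ₊ ≤ T₊ρ₊`, and since both have the same total
mass, `ρ₊` is `T`-invariant. Hence `ρ₊ (T⁻¹ {ψ ≤ 0}) = ρ₊ {ψ ≤ 0} = 0`, which is the claim.
-/

open MeasureTheory Set

open scoped BoundedContinuousFunction ENNReal

namespace MeasureTheory

variable {X : Type*} [MeasurableSpace X]

theorem withDensity_ofReal_mutuallySingular₀ {μ : Measure X} {f : X → ℝ} (hf : AEMeasurable f μ) :
    (μ.withDensity fun x => ENNReal.ofReal (f x)) ⟂ₘ
      μ.withDensity fun x => ENNReal.ofReal (-f x) := by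
  have hpos : (μ.withDensity fun x => ENNReal.ofReal (f x)) =
      μ.withDensity fun x => ENNReal.ofReal (hf.mk f x) :=
    withDensity_congr_ae (by filter_upwards [hf.ae_eq_mk] with x hx; rw [hx])
  have hneg : (μ.withDensity fun x => ENNReal.ofReal (-f x)) =
      μ.withDensity fun x => ENNReal.ofReal (-hf.mk f x) :=
    withDensity_congr_ae (by filter_upwards [hf.ae_eq_mk] with x hx; rw [hx])
  rw [hpos, hneg]
  exact withDensity_ofReal_mutuallySingular hf.measurable_mk

theorem Measure.MutuallySingular.map_eq_self_of_add_map_eq {ρ ν : Measure X} [IsFiniteMeasure ρ]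
    {T : X → X} (hT : Measurable T) (hρν : ρ ⟂ₘ ν) (h : ρ + ν.map T = ν + ρ.map T) :
    ρ.map T = ρ := by
  set S := hρν.nullSetᶜ
  have hle : ρ ≤ ρ.map T := calc
    ρ = ρ.restrict S :=
      (Measure.restrict_eq_self_of_ae_mem (compl_mem_ae_iff.mpr hρν.measure_nullSet)).symm
    _ ≤ (ρ + ν.map T).restrict S := by
      rw [Measure.restrict_add]; exact Measure.le_add_right le_rfl
    _ = (ρ.map T).restrict S := by
      rw [h, Measure.restrict_add, hρν.restrict_compl_nullSet, zero_add]
    _ ≤ ρ.map T := Measure.restrict_le_self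
  refine (Measure.eq_of_le_of_measure_univ_eq hle ?_).symm
  rw [Measure.map_apply hT .univ, preimage_univ]

theorem integral_withDensity_ofReal_sub_integral_withDensity_ofReal_neg {μ : Measure X}
    {ψ g : X → ℝ} (hψ : Integrable ψ μ) (hg : AEStronglyMeasurable g μ) {C : ℝ}
    (hgC : ∀ x, ‖g x‖ ≤ C) :
    ∫ x, g x ∂μ.withDensity (fun x => ENNReal.ofReal (ψ x)) -
      ∫ x, g x ∂μ.withDensity (fun x => ENNReal.ofReal (-ψ x)) = ∫ x, g x * ψ x ∂μ := by
  rw [integral_withDensity_eq_integral_toReal_smul₀ hψ.aemeasurable.ennreal_ofReal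
      (ae_of_all _ fun _ => ENNReal.ofReal_lt_top),
    integral_withDensity_eq_integral_toReal_smul₀ (f := fun x => ENNReal.ofReal (-ψ x))
      hψ.neg.aemeasurable.ennreal_ofReal (ae_of_all _ fun _ => ENNReal.ofReal_lt_top)]
  simp_rw [ENNReal.toReal_ofReal', smul_eq_mul]
  have hpos : Integrable (fun x => max (ψ x) 0 * g x) μ :=
    hψ.pos_part.mul_bdd hg (ae_of_all _ hgC)
  have hneg : Integrable (fun x => max (-ψ x) 0 * g x) μ :=
    hψ.neg.pos_part.mul_bdd hg (ae_of_all _ hgC)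
  rw [← integral_sub hpos hneg]
  congr with x
  rw [← sub_mul, max_zero_sub_eq_self, mul_comm]

theorem withDensity_ofReal_add_map_eq [PseudoEMetricSpace X] [BorelSpace X] {μ : Measure X}
    {T : X → X} (hT : Measurable T) {ψ : X → ℝ} (hψ : Integrable ψ μ)
    (horth : ∀ g : X →ᵇ ℝ, ∫ x, (g x - g (T x)) * ψ x ∂μ = 0) :
    (μ.withDensity fun x => ENNReal.ofReal (ψ x)) +
        (μ.withDensity fun x => ENNReal.ofReal (-ψ x)).map T =
      (μ.withDensity fun x => ENNReal.ofReal (-ψ x)) +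
        (μ.withDensity fun x => ENNReal.ofReal (ψ x)).map T := by
  have := isFiniteMeasure_withDensity_ofReal hψ.2
  have := isFiniteMeasure_withDensity_ofReal hψ.neg.2
  refine ext_of_forall_integral_eq_of_IsFiniteMeasure fun g => ?_
  have hgT : AEStronglyMeasurable (fun x => g (T x)) μ :=
    (g.continuous.measurable.comp hT).aestronglyMeasurable
  have hg_diff := integral_withDensity_ofReal_sub_integral_withDensity_ofReal_neg hψ
    g.continuous.aestronglyMeasurable g.norm_coe_le_norm
  have hgT_diff := integral_withDensity_ofReal_sub_integral_withDensity_ofReal_neg hψ hgT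
    fun x => g.norm_coe_le_norm (T x)
  have hg_orth : ∫ x, g x * ψ x ∂μ = ∫ x, g (T x) * ψ x ∂μ := by
    rw [← sub_eq_zero, ← integral_sub
      (hψ.bdd_mul g.continuous.aestronglyMeasurable (ae_of_all _ g.norm_coe_le_norm))
      (hψ.bdd_mul hgT (ae_of_all _ fun x => g.norm_coe_le_norm (T x)))]
    simpa only [sub_mul] using horth g
  rw [integral_add_measure (g.integrable _) (g.integrable _),
    integral_add_measure (g.integrable _) (g.integrable _),
    integral_map hT.aemeasurable g.continuous.aestronglyMeasurable,
    integral_map hT.aemeasurable g.continuous.aestronglyMeasurable]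
  linarith

theorem measure_ne_zero_inter_preimage_eq_zero_of_map_withDensity_eq {μ : Measure X}
    {f : X → ℝ≥0∞} (hf : AEMeasurable f μ) {T : X → X}
    (hT : AEMeasurable T (μ.withDensity f)) (h : (μ.withDensity f).map T = μ.withDensity f) :
    μ ({x | f x ≠ 0} ∩ T ⁻¹' {x | f x = 0}) = 0 := by
  rw [← withDensity_apply_eq_zero' hf]
  refine le_antisymm ?_ zero_le
  calc _ ≤ (μ.withDensity f).map T {x | f x = 0} := Measure.le_map_apply hT _
    _ = 0 := by
      rw [h, withDensity_apply_eq_zero' hf, ← ofPred_and]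
      simp

end MeasureTheory

theorem stmt_4_general {X : Type*} [MetricSpace X]
    [MeasurableSpace X] [BorelSpace X]
    (μ : Measure X) [IsProbabilityMeasure μ]
    (T : X → X) (hT : Continuous T)
    (ψ : X → ℝ) (hψ : MemLp ψ 2 μ)
    (horth : ∀ φ : C(X, ℝ), ∫ x, (φ x - φ (T x)) * ψ x ∂μ = 0) :
    μ ({x | 0 < ψ x} \ T ⁻¹' {x | 0 < ψ x}) = 0 := by
  have hψ₁ : Integrable ψ μ := hψ.integrable one_le_two
  have := isFiniteMeasure_withDensity_ofReal hψ₁.2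
  have hinv : (μ.withDensity fun x => ENNReal.ofReal (ψ x)).map T =
      μ.withDensity fun x => ENNReal.ofReal (ψ x) :=
    (withDensity_ofReal_mutuallySingular₀ hψ₁.aemeasurable).map_eq_self_of_add_map_eq
      hT.measurable (withDensity_ofReal_add_map_eq hT.measurable hψ₁
        fun g => horth g.toContinuousMap)
  convert measure_ne_zero_inter_preimage_eq_zero_of_map_withDensity_eq
    hψ₁.aemeasurable.ennreal_ofReal hT.measurable.aemeasurable hinv using 2
  ext x
  simp

theorem stmt_4 {X : Type*} [MetricSpace X] [CompactSpace X]
    [MeasurableSpace X] [BorelSpace X]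
    (μ : Measure X) [IsProbabilityMeasure μ]
    (T : X → X) (hT : Continuous T)
    (ψ : X → ℝ) (hψ : MemLp ψ 2 μ)
    (horth : ∀ φ : C(X, ℝ), ∫ x, (φ x - φ (T x)) * ψ x ∂μ = 0) :
    μ ({x | 0 < ψ x} \ T ⁻¹' {x | 0 < ψ x}) = 0 :=
  stmt_4_general μ T hT ψ hψ horth
end

section
/- If 0 < a ≤ 4, then the replicator map f_{a,b}(x) = x/(x + (1-x)e^{a(x-b)}) is monotone increasing on [0,1], because a·x² - a·x + 1 ≥ 0 for all x ∈ [0,1]. -/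
noncomputable def replicator (a b : ℝ) (x : ℝ) : ℝ :=
  x / (x + (1 - x) * Real.exp (a * (x - b)))

open Real Set

lemma mul_sq_sub_mul_add_one_nonneg {a x : ℝ} (ha4 : a ≤ 4) (hx : x ∈ Icc (0 : ℝ) 1) :
    0 ≤ a * x ^ 2 - a * x + 1 := by
  obtain ⟨hx0, hx1⟩ := hx
  -- `a x (1 - x) ≤ 4 x (1 - x) ≤ 1`, the last step being `(2x - 1)² ≥ 0`.
  nlinarith [sq_nonneg (2 * x - 1),
    mul_nonneg (mul_nonneg (sub_nonneg.2 ha4) hx0) (sub_nonneg.2 hx1)]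

lemma replicator_denom_pos (a b : ℝ) {x : ℝ} (hx : x ∈ Icc (0 : ℝ) 1) :
    0 < x + (1 - x) * exp (a * (x - b)) := by
  obtain ⟨hx0, hx1⟩ := hx
  rcases hx0.eq_or_lt with rfl | hx0
  · simpa using exp_pos _
  · nlinarith [exp_pos (a * (x - b))]

lemma hasDerivAt_replicator (a b : ℝ) {x : ℝ} (hD : x + (1 - x) * exp (a * (x - b)) ≠ 0) :
    HasDerivAt (replicator a b)
      (exp (a * (x - b)) * (a * x ^ 2 - a * x + 1) / (x + (1 - x) * exp (a * (x - b))) ^ 2) x := by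
  have hE : HasDerivAt (fun y => exp (a * (y - b))) (exp (a * (x - b)) * a) x := by
    simpa using (((hasDerivAt_id x).sub_const b).const_mul a).exp
  have hDen : HasDerivAt (fun y => y + (1 - y) * exp (a * (y - b)))
      (1 + (-1 * exp (a * (x - b)) + (1 - x) * (exp (a * (x - b)) * a))) x :=
    (hasDerivAt_id x).add (((hasDerivAt_id x).const_sub 1).mul hE)
  exact ((hasDerivAt_id' x).div hDen hD).congr_deriv (by ring)

theorem replicator_monotoneOn {a : ℝ} (b : ℝ) (ha4 : a ≤ 4) :
    MonotoneOn (replicator a b) (Icc (0 : ℝ) 1) := by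
  have hderiv : ∀ x ∈ Icc (0 : ℝ) 1, HasDerivAt (replicator a b) _ x :=
    fun x hx => hasDerivAt_replicator a b (replicator_denom_pos a b hx).ne'
  refine monotoneOn_of_deriv_nonneg (convex_Icc 0 1)
    (fun x hx => (hderiv x hx).continuousAt.continuousWithinAt) ?_ ?_ <;> rw [interior_Icc]
  · exact fun x hx => (hderiv x (Ioo_subset_Icc_self hx)).differentiableAt.differentiableWithinAt
  · intro x hx
    have hx' := Ioo_subset_Icc_self hx
    rw [(hderiv x hx').deriv]
    exact div_nonneg (mul_nonneg (exp_pos _).le (mul_sq_sub_mul_add_one_nonneg ha4 hx'))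
      (sq_nonneg _)

theorem stmt_13_general (a b : ℝ) (ha4 : a ≤ 4) :
    (∀ x ∈ Set.Icc (0 : ℝ) 1, 0 ≤ a * x ^ 2 - a * x + 1) ∧
    MonotoneOn (replicator a b) (Set.Icc (0 : ℝ) 1) :=
  ⟨fun _ hx => mul_sq_sub_mul_add_one_nonneg ha4 hx, replicator_monotoneOn b ha4⟩

theorem stmt_13 (a b : ℝ) (ha : 0 < a) (ha4 : a ≤ 4) (hb : b ∈ Set.Ioo (0 : ℝ) 1) :
    (∀ x ∈ Set.Icc (0 : ℝ) 1, 0 ≤ a * x ^ 2 - a * x + 1) ∧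
    MonotoneOn (replicator a b) (Set.Icc (0 : ℝ) 1) :=
  stmt_13_general a b ha4
end

section
/- Let h(x) = ln((1-x)/x) on (0,1) and g_{a,b}(y) = y + a/(e^y + 1) - a·b on ℝ. Then for all x ∈ (0,1), g_{a,b}(h(x)) = h(f_{a,b}(x)), where f_{a,b}(x) = x/(x + (1-x)e^{a(x-b)}); that is, h conjugates f_{a,b} to g_{a,b}. -/
noncomputable def gMap (a b : ℝ) (y : ℝ) : ℝ :=
  y + a / (Real.exp y + 1) - a * b

/-! The replicator map multiplies the odds `(1 - x) / x` by `exp (a * (x - b))`, so it adds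
`a * (x - b)` to the log-odds `y`; `gMap` adds the same amount because `1 / (exp y + 1)`
recovers `x` from `y`. -/

open Real

lemma inv_exp_log_odds_add_one {x : ℝ} (hx0 : 0 < x) (hx1 : x < 1) :
    1 / (exp (log ((1 - x) / x)) + 1) = x := by
  rw [exp_log (div_pos (sub_pos.mpr hx1) hx0), div_add_one hx0.ne', one_div_div]
  ring

lemma gMap_log_odds {a b x : ℝ} (hx0 : 0 < x) (hx1 : x < 1) :
    gMap a b (log ((1 - x) / x)) = log ((1 - x) / x) + a * (x - b) := by
  rw [gMap, div_eq_mul_one_div a, inv_exp_log_odds_add_one hx0 hx1]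
  ring

lemma odds_replicator {a b x : ℝ} (hx0 : 0 < x) (hx1 : x ≤ 1) :
    (1 - replicator a b x) / replicator a b x = (1 - x) / x * exp (a * (x - b)) := by
  have hd : 0 < x + (1 - x) * exp (a * (x - b)) := by
    have : 0 ≤ 1 - x := sub_nonneg.mpr hx1
    positivity
  unfold replicator
  field_simp
  ring

theorem stmt_16_general (a b : ℝ) :
    ∀ x ∈ Set.Ioo (0 : ℝ) 1,
      gMap a b (Real.log ((1 - x) / x)) =
        Real.log ((1 - replicator a b x) / replicator a b x) := by
  rintro x ⟨hx0, hx1⟩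
  have hodds : 0 < (1 - x) / x := div_pos (sub_pos.mpr hx1) hx0
  rw [gMap_log_odds hx0 hx1, odds_replicator hx0 hx1.le,
    log_mul hodds.ne' (exp_pos _).ne', log_exp]

theorem stmt_16 (a b : ℝ) (ha : 0 < a) (hb : b ∈ Set.Ioo (0 : ℝ) 1) :
    ∀ x ∈ Set.Ioo (0 : ℝ) 1,
      gMap a b (Real.log ((1 - x) / x)) =
        Real.log ((1 - replicator a b x) / replicator a b x) :=
  stmt_16_general a b
end
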